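/- For every nonnegative integer n, the first-order differential operator X_1 = Σ_{i=1}^N (z_i − z_{i+1})^{-1} (z_i ∂_i − z_{i+1} ∂_{i+1}) leaves invariant the space 𝒳_1^n = ℂ[σ_1, σ_2, τ_N] ∩ P^n; that is, if f is a complex polynomial in z_1,…,z_N of total degree at most n that can be written as a polynomial in σ_1, σ_2 and τ_N, then X_1 f (computed in the field of rational functions ℂ(z_1,…,z_N)) is again a polynomial in σ_1, σ_2, τ_N of total degree at most n. -/

import Mathlib

noncomputable section

open MvPolynomial

/-- Polynomials in `N` variables over `ℂ`. -/
abbrev MvP (N : ℕ) : Type := MvPolynomial (Fin N) ℂ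

/-- The canonical embedding of polynomials into the field of rational functions. -/
noncomputable def phi (N : ℕ) : MvP N →+* FractionRing (MvP N) :=
  algebraMap (MvP N) (FractionRing (MvP N))

/-- The power sum `σ_k = ∑ i, z_i ^ k`. -/
def sig (N k : ℕ) : MvP N := ∑ i : Fin N, X i ^ k

/-- The top elementary symmetric polynomial `τ_N = ∏ i, z_i`. -/
def tauTop (N : ℕ) : MvP N := ∏ i : Fin N, X i

/-- The operator `X_1 = ∑ i (z_i - z_{i+1})⁻¹ (z_i ∂_i - z_{i+1} ∂_{i+1})` (indices cyclic),
computed in the field of rational functions. -/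
noncomputable def X1op (N : ℕ) [NeZero N] (f : MvP N) : FractionRing (MvP N) :=
  ∑ i : Fin N, (phi N (X i - X (i + 1)))⁻¹ *
    phi N (X i * pderiv i f - X (i + 1) * pderiv (i + 1) f)

/-! ### Auxiliary degree lemmas -/

/-- Graded lexicographic degree function. -/
noncomputable def Dg (σ : Type*) [LinearOrder σ] : (σ →₀ ℕ) → ℕ ×ₗ Lex (σ →₀ ℕ) :=
  fun m => toLex (m.sum fun _ e => e, toLex m)

lemma Dg_inj (σ : Type*) [LinearOrder σ] : Function.Injective (Dg σ) := by
  intro a b h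
  have := congrArg (fun x => (ofLex x).2) h
  simpa [Dg] using this

lemma Dg_add (σ : Type*) [LinearOrder σ] (a b : σ →₀ ℕ) : Dg σ (a + b) = Dg σ a + Dg σ b := by
  unfold Dg
  rw [Finsupp.sum_add_index' (fun _ => rfl) (fun _ _ _ => rfl)]
  rfl

lemma fst_Dg_supDegree {σ : Type*} [LinearOrder σ] {p : MvPolynomial σ ℂ} (hp : p ≠ 0) :
    (ofLex (AddMonoidAlgebra.supDegree (Dg σ) p)).1 = p.totalDegree := by
  obtain ⟨a, ha, he⟩ := AddMonoidAlgebra.exists_supDegree_mem_support (Dg σ) hp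
  rw [he]
  apply le_antisymm
  · exact le_totalDegree ha
  · apply Finset.sup_le
    intro b hb
    have hle : Dg σ b ≤ Dg σ a := by
      rw [← he]
      exact Finset.le_sup hb
    rcases Prod.Lex.le_iff.mp hle with h | h
    · exact h.le
    · exact h.1.le

lemma totalDegree_mul_eq' {σ : Type*} [LinearOrder σ] {p q : MvPolynomial σ ℂ} (hp : p ≠ 0)
    (hq : q ≠ 0) : (p * q).totalDegree = p.totalDegree + q.totalDegree := by
  have hD := Dg_inj σ
  have hmul := AddMonoidAlgebra.supDegree_mul (p := p) (q := q) hD (Dg_add σ)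
    (mul_ne_zero ((AddMonoidAlgebra.leadingCoeff_ne_zero hD).mpr hp)
      ((AddMonoidAlgebra.leadingCoeff_ne_zero hD).mpr hq)) hp hq
  rw [← fst_Dg_supDegree (mul_ne_zero hp hq), ← fst_Dg_supDegree hp, ← fst_Dg_supDegree hq, hmul]
  rfl

lemma totalDegree_pderiv_le' {σ : Type*} [DecidableEq σ] (i : σ) (f : MvPolynomial σ ℂ) :
    (pderiv i f).totalDegree ≤ f.totalDegree := by
  conv_lhs => rw [f.as_sum, map_sum]
  apply totalDegree_finsetSum_le
  intro s hs
  rw [pderiv_monomial]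
  refine (totalDegree_monomial_le _ _).trans ?_
  refine le_trans (Finsupp.sum_le_sum_index tsub_le_self (fun _ _ => monotone_id)
    (fun _ _ => rfl)) ?_
  exact le_totalDegree hs

lemma totalDegree_prod_eq' {σ ι : Type*} [LinearOrder σ] (s : Finset ι)
    (f : ι → MvPolynomial σ ℂ) (h : ∀ i ∈ s, f i ≠ 0) :
    (∏ i ∈ s, f i).totalDegree = ∑ i ∈ s, (f i).totalDegree := by
  classical
  induction s using Finset.induction_on with
  | empty => simp
  | insert _ _ hx ih =>
    rename_i a s
    rw [Finset.prod_insert hx, Finset.sum_insert hx,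
      totalDegree_mul_eq' (h a (Finset.mem_insert_self a s))
        (Finset.prod_ne_zero_iff.mpr fun i hi => h i (Finset.mem_insert_of_mem hi)),
      ih fun i hi => h i (Finset.mem_insert_of_mem hi)]

set_option maxHeartbeats 1000000 in
set_option synthInstance.maxHeartbeats 400000 in
theorem stmt_1 (N : ℕ) [NeZero N] (hN : 3 ≤ N) (n : ℕ) (f : MvP N)
    (hmem : f ∈ Algebra.adjoin ℂ ({sig N 1, sig N 2, tauTop N} : Set (MvP N)))
    (hdeg : f.totalDegree ≤ n) :
    ∃ g : MvP N,
      g ∈ Algebra.adjoin ℂ ({sig N 1, sig N 2, tauTop N} : Set (MvP N)) ∧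
      g.totalDegree ≤ n ∧ phi N g = X1op N f := by
  classical
  have hinj : Function.Injective (phi N) := IsFractionRing.injective _ _
  have hne : ∀ i : Fin N, i ≠ i + 1 := by
    intro i h
    have hv := congrArg Fin.val h
    rw [Fin.val_add, Fin.val_one'] at hv
    have h1 : 1 % N = 1 := Nat.mod_eq_of_lt (by omega)
    rw [h1] at hv
    have hlt := i.isLt
    by_cases hc : i.val + 1 < N
    · rw [Nat.mod_eq_of_lt hc] at hv
      omega
    · have hEq : i.val + 1 = N := by omega
      rw [hEq, Nat.mod_self] at hv
      omega
  have hdne : ∀ i : Fin N, (X i - X (i + 1) : MvP N) ≠ 0 := fun i =>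
    sub_ne_zero_of_ne (fun h => hne i (X_injective h))
  have hphid : ∀ i : Fin N, phi N (X i - X (i + 1)) ≠ 0 := fun i =>
    (map_ne_zero_iff _ hinj).mpr (hdne i)
  -- Existence of the polynomial `g` with `phi N g = X1op N f`.
  have hex : ∀ x : MvP N, x ∈ Algebra.adjoin ℂ ({sig N 1, sig N 2, tauTop N} : Set (MvP N)) →
      ∃ g ∈ Algebra.adjoin ℂ ({sig N 1, sig N 2, tauTop N} : Set (MvP N)),
      phi N g = X1op N x := by
    intro x hx
    induction hx using Algebra.adjoin_induction with
    | mem x hx =>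
      rcases hx with h | h | h
      · -- sig N 1
        subst h
        refine ⟨(N : MvP N), Subalgebra.natCast_mem _ N, ?_⟩
        have h1 : ∀ j : Fin N, pderiv j (sig N 1) = 1 := by
          intro j
          unfold sig
          rw [map_sum]
          simp [pderiv_X, Finset.sum_pi_single']
        unfold X1op
        simp only [h1, mul_one]
        rw [Finset.sum_congr rfl fun i _ => inv_mul_cancel₀ (hphid i)]
        rw [Finset.sum_const, Finset.card_univ, Fintype.card_fin, map_natCast, nsmul_eq_mul,
          mul_one]
      · -- sig N 2
        subst h
        refine ⟨MvPolynomial.C 4 * sig N 1,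
          mul_mem (Subalgebra.algebraMap_mem _ (4 : ℂ))
            (Algebra.subset_adjoin (by simp)), ?_⟩
        have h2 : ∀ j : Fin N, pderiv j (sig N 2) = 2 * X j := by
          intro j
          unfold sig
          rw [map_sum]
          rw [Finset.sum_eq_single j]
          · simp [pderiv_pow]
          · intro i _ hij
            simp [pderiv_pow, pderiv_X_of_ne hij]
          · simp
        unfold X1op
        simp only [h2]
        have hterm : ∀ i : Fin N,
            (phi N (X i - X (i + 1)))⁻¹ *
              phi N (X i * (2 * X i) - X (i + 1) * (2 * X (i + 1)))
            = phi N (2 * X i + 2 * X (i + 1)) := by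
          intro i
          have : (X i * (2 * X i) - X (i + 1) * (2 * X (i + 1)) : MvP N)
              = (X i - X (i + 1)) * (2 * X i + 2 * X (i + 1)) := by ring
          rw [this, map_mul, inv_mul_cancel_left₀ (hphid i)]
        rw [Finset.sum_congr rfl fun i _ => hterm i, ← map_sum]
        congr 1
        rw [Finset.sum_add_distrib]
        have hshift : ∑ i : Fin N, (2 * X (i + 1) : MvP N) = ∑ i : Fin N, 2 * X i :=
          Fintype.sum_equiv (Equiv.addRight (1 : Fin N)) _ _ (fun i => rfl)
        rw [hshift, ← Finset.sum_add_distrib]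
        unfold sig
        rw [Finset.mul_sum]
        refine (Finset.sum_congr rfl fun i _ => ?_).symm
        have hC : (MvPolynomial.C (4 : ℂ) : MvP N) = 4 := by
          simpa using (map_ofNat (MvPolynomial.C : ℂ →+* MvP N) 4)
        rw [hC]
        ring
      · -- tauTop
        subst h
        refine ⟨0, zero_mem _, ?_⟩
        have h3 : ∀ j : Fin N, X j * pderiv j (tauTop N) = tauTop N := by
          intro j
          have hsplit : tauTop N = X j * ∏ i ∈ Finset.univ.erase j, X i := by
            unfold tauTop
            rw [Finset.mul_prod_erase _ _ (Finset.mem_univ j)]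
          have hzero : pderiv j (∏ i ∈ Finset.univ.erase j, X i : MvP N) = 0 := by
            apply pderiv_eq_zero_of_notMem_vars
            intro hmem'
            have := vars_prod (s := Finset.univ.erase j) (f := fun i => (X i : MvP N)) hmem'
            simp only [vars_X, Finset.mem_biUnion, Finset.mem_singleton] at this
            obtain ⟨i, hi, rfl⟩ := this
            exact (Finset.mem_erase.mp hi).1 rfl
          conv_lhs => rw [hsplit, pderiv_mul, hzero, mul_zero, add_zero, pderiv_X_self, one_mul,
            ← hsplit]
        unfold X1op
        rw [map_zero]
        refine (Finset.sum_eq_zero fun i _ => ?_).symm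
        rw [h3, h3, sub_self, map_zero, mul_zero]
    | algebraMap r =>
      refine ⟨0, zero_mem _, ?_⟩
      unfold X1op
      rw [map_zero]
      refine (Finset.sum_eq_zero fun i _ => ?_).symm
      rw [MvPolynomial.algebraMap_eq, pderiv_C, pderiv_C, mul_zero, mul_zero, sub_self,
        map_zero, mul_zero]
    | add x y hx hy ihx ihy =>
      obtain ⟨gx, hgxA, hgx⟩ := ihx
      obtain ⟨gy, hgyA, hgy⟩ := ihy
      refine ⟨gx + gy, add_mem hgxA hgyA, ?_⟩
      rw [map_add, hgx, hgy]
      unfold X1op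
      rw [← Finset.sum_add_distrib]
      refine (Finset.sum_congr rfl fun i _ => ?_).symm
      rw [map_add, map_add]
      have : (X i * (pderiv i x + pderiv i y)
            - X (i + 1) * (pderiv (i + 1) x + pderiv (i + 1) y) : MvP N)
          = (X i * pderiv i x - X (i + 1) * pderiv (i + 1) x)
            + (X i * pderiv i y - X (i + 1) * pderiv (i + 1) y) := by ring
      rw [this, map_add, mul_add]
    | mul x y hxA hyA ihx ihy =>
      obtain ⟨gx, hgxA, hgx⟩ := ihx
      obtain ⟨gy, hgyA, hgy⟩ := ihy
      refine ⟨x * gy + y * gx, add_mem (mul_mem hxA hgyA) (mul_mem hyA hgxA), ?_⟩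
      rw [map_add, map_mul, map_mul, hgx, hgy]
      unfold X1op
      rw [Finset.mul_sum, Finset.mul_sum, ← Finset.sum_add_distrib]
      refine (Finset.sum_congr rfl fun i _ => ?_).symm
      rw [pderiv_mul (i := i), pderiv_mul (i := i + 1)]
      have : (X i * (pderiv i x * y + x * pderiv i y)
            - X (i + 1) * (pderiv (i + 1) x * y + x * pderiv (i + 1) y) : MvP N)
          = x * (X i * pderiv i y - X (i + 1) * pderiv (i + 1) y)
            + y * (X i * pderiv i x - X (i + 1) * pderiv (i + 1) x) := by ring
      rw [this, map_add, map_mul, map_mul]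
      ring
  obtain ⟨g, hgA, hgeq⟩ := hex f hmem
  refine ⟨g, hgA, ?_, hgeq⟩
  -- Degree bound.
  by_cases hg0 : g = 0
  · simp [hg0]
  set Q : MvP N := ∏ i : Fin N, (X i - X (i + 1)) with hQ
  set P : MvP N := ∑ i : Fin N, (∏ j ∈ Finset.univ.erase i, (X j - X (j + 1))) *
      (X i * pderiv i f - X (i + 1) * pderiv (i + 1) f) with hP
  have hQ0 : Q ≠ 0 := Finset.prod_ne_zero_iff.mpr fun i _ => hdne i
  have hQdeg : Q.totalDegree = N := by
    rw [hQ, totalDegree_prod_eq' _ _ (fun i _ => hdne i)]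
    have h1 : ∀ i : Fin N, (X i - X (i + 1) : MvP N).totalDegree = 1 := fun i =>
      ((isHomogeneous_X _ _).sub (isHomogeneous_X _ _)).totalDegree (hdne i)
    rw [Finset.sum_congr rfl fun i _ => h1 i]
    simp
  have hQP : g * Q = P := by
    apply hinj
    rw [map_mul, hgeq]
    unfold X1op
    rw [Finset.sum_mul, hP, map_sum]
    refine Finset.sum_congr rfl fun i _ => ?_
    rw [map_mul, hQ, map_prod, ← Finset.mul_prod_erase _ _ (Finset.mem_univ i), map_prod]
    set a := phi N (X i - X (i + 1))
    set b := ∏ j ∈ Finset.univ.erase i, phi N (X j - X (j + 1))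
    set c := phi N (X i * pderiv i f - X (i + 1) * pderiv (i + 1) f)
    have : a⁻¹ * c * (a * b) = (a⁻¹ * a) * (b * c) := by ring
    rw [this, inv_mul_cancel₀ (hphid i), one_mul]
  have hPdeg : P.totalDegree ≤ (N - 1) + (n + 1) := by
    rw [hP]
    apply totalDegree_finsetSum_le
    intro i _
    refine (totalDegree_mul _ _).trans (add_le_add ?_ ?_)
    · refine (totalDegree_finset_prod _ _).trans ?_
      have : ∀ j ∈ Finset.univ.erase i, (X j - X (j + 1) : MvP N).totalDegree = 1 := fun j _ =>
        ((isHomogeneous_X _ _).sub (isHomogeneous_X _ _)).totalDegree (hdne j)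
      rw [Finset.sum_congr rfl this]
      simp [Finset.card_erase_of_mem]
    · refine (totalDegree_sub _ _).trans (max_le ?_ ?_)
      · refine (totalDegree_mul _ _).trans ?_
        rw [totalDegree_X]
        have := (totalDegree_pderiv_le' i f).trans hdeg
        omega
      · refine (totalDegree_mul _ _).trans ?_
        rw [totalDegree_X]
        have := (totalDegree_pderiv_le' (i + 1) f).trans hdeg
        omega
  have hgq : g.totalDegree + N = P.totalDegree := by
    rw [← hQP, totalDegree_mul_eq' hg0 hQ0, hQdeg]
  omega
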